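/- (Diamond Lemma) Let Φ be a crystallographic root system with Weyl group W and Hessenberg set 𝔥. Suppose v covers w in Bruhat order, s_i is a simple reflection with ℓ(s_i w) = ℓ(w) + 1 = ℓ(v), and s_i w ≠ v. Then s_i v > v with ℓ(s_i v) = ℓ(s_i w) + 1, and moreover the edge w → v belongs to the Hessenberg graph Γ_𝔥 if and only if the edge s_i w → s_i v belongs to Γ_𝔥. -/

import Mathlib

open scoped RealInnerProductSpace Pointwise

noncomputable section

/-- Euclidean `n`-space, the ambient space of the root system. -/
abbrev EV (n : ℕ) := EuclideanSpace ℝ (Fin n)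

/-- The (orthogonal) reflection in the hyperplane orthogonal to `α`. -/
def sRefl {n : ℕ} (α : EV n) : EV n ≃ₗᵢ[ℝ] EV n :=
  Submodule.reflection ((ℝ ∙ α)ᗮ)

/-- A finite crystallographic root system in `ℝⁿ`, together with a choice of
positive roots and a base of simple roots. -/
structure BasedRootSystem (n : ℕ) where
  /-- the set of roots -/
  Φ : Set (EV n)
  /-- the positive roots -/
  pos : Set (EV n)
  /-- the base of simple roots -/
  Δ : Set (EV n)
  finite : Φ.Finite
  nonzero : ∀ α ∈ Φ, α ≠ 0
  reduced : ∀ α ∈ Φ, ∀ c : ℝ, c • α ∈ Φ → c = 1 ∨ c = -1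
  reflect_mem : ∀ α ∈ Φ, ∀ β ∈ Φ, sRefl α β ∈ Φ
  cartan_int : ∀ α ∈ Φ, ∀ β ∈ Φ, ∃ m : ℤ, (m : ℝ) = 2 * ⟪α, β⟫ / ⟪α, α⟫
  pos_sub : pos ⊆ Φ
  pos_union : Φ = pos ∪ (-pos)
  pos_disj : pos ∩ (-pos) = ∅
  Δ_sub : Δ ⊆ pos
  Δ_indep : LinearIndependent ℝ ((↑) : Δ → EV n)
  Δ_span : Submodule.span ℝ Δ = ⊤
  pos_combo : ∀ α ∈ pos, α ∈ AddSubmonoid.closure Δ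

namespace BasedRootSystem

variable {n : ℕ} (R : BasedRootSystem n)

/-- The root order: `α ≺ β` iff `β - α` is a nonempty sum of positive roots. -/
def prec (a b : EV n) : Prop :=
  a ≠ b ∧ b - a ∈ AddSubmonoid.closure R.pos

/-- An ideal of the positive roots: upward closed for the root order. -/
def IsIdeal (I : Set (EV n)) : Prop :=
  I ⊆ R.pos ∧ ∀ β ∈ I, ∀ α ∈ R.pos, R.prec β α → α ∈ I

/-- A Hessenberg set: the complement in `Φ⁺` of an ideal. -/
def IsHess (h : Set (EV n)) : Prop :=
  h ⊆ R.pos ∧ R.IsIdeal (R.pos \ h)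

/-- The Weyl group, generated by the reflections in the roots. -/
def Weyl : Subgroup (EV n ≃ₗᵢ[ℝ] EV n) :=
  Subgroup.closure {g | ∃ α ∈ R.Φ, g = sRefl α}

/-- Application of a Weyl group element to a vector. -/
def ap (w : R.Weyl) (x : EV n) : EV n := (w : EV n ≃ₗᵢ[ℝ] EV n) x

/-- The inversion set `N_w = {α ∈ Φ⁺ : w⁻¹ α ∈ Φ⁻}`. -/
def N (w : R.Weyl) : Set (EV n) := {α | α ∈ R.pos ∧ R.ap w⁻¹ α ∈ -R.pos}

/-- The length of a Weyl group element, `ℓ(w) = |N_w|`. -/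
def len (w : R.Weyl) : ℕ := (R.N w).ncard

/-- The `𝔥`-inversion set `N_w^𝔥 = {α ∈ Φ⁺ : w⁻¹ α ∈ -𝔥}`. -/
def Nh (h : Set (EV n)) (w : R.Weyl) : Set (EV n) :=
  {α | α ∈ R.pos ∧ R.ap w⁻¹ α ∈ -h}

/-- `ℓ_𝔥(w) = |N_w^𝔥|`, the number of Hessenberg edges ending at `w`. -/
def lenh (h : Set (EV n)) (w : R.Weyl) : ℕ := (R.Nh h w).ncard

/-- `v` covers `w` in Bruhat order: `v = s_α w` with `ℓ(v) = ℓ(w) + 1`. -/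
def Covers (v w : R.Weyl) : Prop :=
  ∃ α ∈ R.pos, (v : EV n ≃ₗᵢ[ℝ] EV n) = sRefl α * (w : EV n ≃ₗᵢ[ℝ] EV n) ∧
    R.len v = R.len w + 1

/-- Bruhat order: the transitive closure of the relations `w < s_α w`
whenever the length increases. -/
def bruhatLt (w v : R.Weyl) : Prop :=
  Relation.TransGen (fun u u' : R.Weyl =>
    ∃ α ∈ R.pos, (u' : EV n ≃ₗᵢ[ℝ] EV n) = sRefl α * (u : EV n ≃ₗᵢ[ℝ] EV n) ∧
      R.len u < R.len u') w v

/-- The edge relation of the Hessenberg graph `Γ_𝔥`: `u → w` when `w = s_α u`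
with `α ∈ Φ⁺` and `w⁻¹ α ∈ -𝔥`. -/
def Edge (h : Set (EV n)) (u w : R.Weyl) : Prop :=
  ∃ α ∈ R.pos, (w : EV n ≃ₗᵢ[ℝ] EV n) = sRefl α * (u : EV n ≃ₗᵢ[ℝ] EV n) ∧
    R.ap w⁻¹ α ∈ -h

/-- The flow-up (reachability) order of the Hessenberg graph. -/
def flowLe (h : Set (EV n)) (x y : R.Weyl) : Prop :=
  Relation.ReflTransGen (R.Edge h) x y

/-- The strict flow-up order. -/
def flowLt (h : Set (EV n)) (x y : R.Weyl) : Prop :=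
  Relation.TransGen (R.Edge h) x y

/-- The linear polynomial in `ℝ[Δ] = ℝ[x₁,…,xₙ]` corresponding to a vector. -/
def lin (α : EV n) : MvPolynomial (Fin n) ℝ :=
  ∑ i, MvPolynomial.C (α i) * MvPolynomial.X i

/-- The action of an isometry `w` on the polynomial ring, induced by the
linear action on the ambient space: it sends `lin α` to `lin (w α)`. -/
def polyAct (w : EV n ≃ₗᵢ[ℝ] EV n) :
    MvPolynomial (Fin n) ℝ →ₐ[ℝ] MvPolynomial (Fin n) ℝ :=
  MvPolynomial.aeval fun i => lin (w (EuclideanSpace.single i 1))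

/-- The dot action of the Weyl group on `Maps(W, ℝ[Δ])`:
`(w · P)(u) = w (P (w⁻¹ u))`. -/
def dot (w : R.Weyl) (P : R.Weyl → MvPolynomial (Fin n) ℝ) :
    R.Weyl → MvPolynomial (Fin n) ℝ :=
  fun u => polyAct (w : EV n ≃ₗᵢ[ℝ] EV n) (P (w⁻¹ * u))

/-- Membership in the GKM ring `H_T^*(𝔥)`: the GKM conditions
`P(w) - P(s_α w) ∈ ⟨α⟩` along all edges of `Γ_𝔥`. -/
def GKM (h : Set (EV n)) (P : R.Weyl → MvPolynomial (Fin n) ℝ) : Prop :=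
  ∀ u w : R.Weyl, ∀ α ∈ R.pos,
    (w : EV n ≃ₗᵢ[ℝ] EV n) = sRefl α * (u : EV n ≃ₗᵢ[ℝ] EV n) →
    R.ap w⁻¹ α ∈ -h → P w - P u ∈ Ideal.span {lin α}

/-- The product `∏_{α ∈ S} α` (over `S ∩ Φ`) as an element of `ℝ[Δ]`. -/
def prodRoots (S : Set (EV n)) : MvPolynomial (Fin n) ℝ :=
  ∏ α ∈ (R.finite.inter_of_right S).toFinset, lin α

/-- A flow-up class at `x`: homogeneous of degree `ℓ_𝔥(x)`, with
`P(x) = ∏_{α ∈ N_x^𝔥} α`, supported on the flow-up of `x`, and satisfying the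
GKM conditions. -/
def IsFlowUp (h : Set (EV n)) (x : R.Weyl)
    (P : R.Weyl → MvPolynomial (Fin n) ℝ) : Prop :=
  R.GKM h P ∧ (∀ y, (P y).IsHomogeneous (R.lenh h x)) ∧
    P x = R.prodRoots (R.Nh h x) ∧ ∀ y, P y ≠ 0 → R.flowLe h x y

/-- Irreducibility: the roots admit no splitting into two nonempty mutually
orthogonal parts. -/
def IsIrreducible : Prop :=
  ∀ Ψ Ψ' : Set (EV n), Ψ ∪ Ψ' = R.Φ → (∀ a ∈ Ψ, ∀ b ∈ Ψ', ⟪a, b⟫ = 0) →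
    Ψ = ∅ ∨ Ψ' = ∅

/-- `γ` is the highest root: `α ⪯ γ` for every root `α`. -/
def IsHighest (γ : EV n) : Prop :=
  γ ∈ R.pos ∧ ∀ α ∈ R.Φ, α = γ ∨ R.prec α γ

end BasedRootSystem

/-!
Write `v = s_β w`. Sorting `α ∈ N_v` by the sign of `s_β α` identifies `N_v` with
`(N_w \ N_{s_β}) ∪ (N_{s_β} \ N_w)`, and when `w⁻¹β > 0` the involution `γ ↦ -s_β γ` maps
`N_w ∩ N_{s_β}` into `N_{s_β} \ N_w \ {β}`; so `ℓ(s_β w) > ℓ(w)` exactly when `w⁻¹β > 0`.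
In the diamond, `γ := s_i β` is positive (as `β ≠ α_i`), `s_i v = s_γ (s_i w)` and
`(s_i w)⁻¹γ = w⁻¹β > 0`, whence `ℓ(s_i v) > ℓ(s_i w) = ℓ(v)`, forcing `ℓ(s_i v) = ℓ(v) + 1`.
Edges transfer along `α ↦ s_i α` because `(s_i v)⁻¹(s_i α) = v⁻¹α`.
-/

lemma sRefl_apply {n : ℕ} (α x : EV n) : sRefl α x = x - (2 * ⟪α, x⟫ / ⟪α, α⟫) • α := by
  rw [sRefl, Submodule.reflection_orthogonal_apply, Submodule.reflection_singleton_apply,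
    real_inner_self_eq_norm_sq]
  simp only [RCLike.ofReal_real_eq_id, id, neg_sub]
  module

lemma sRefl_self {n : ℕ} (α : EV n) : sRefl α α = -α :=
  Submodule.reflection_orthogonalComplement_singleton_eq_neg α

lemma sRefl_sRefl {n : ℕ} (α x : EV n) : sRefl α (sRefl α x) = x :=
  Submodule.reflection_reflection _ x

lemma sRefl_mul_self {n : ℕ} (α : EV n) : sRefl α * sRefl α = 1 :=
  Submodule.reflection_mul_reflection _

lemma sRefl_inv {n : ℕ} (α : EV n) : (sRefl α)⁻¹ = sRefl α :=
  Submodule.reflection_inv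

lemma sRefl_map {n : ℕ} (g : EV n ≃ₗᵢ[ℝ] EV n) (β : EV n) :
    sRefl (g β) = g * sRefl β * g⁻¹ := by
  ext1 x
  obtain ⟨y, rfl⟩ := g.surjective x
  simp [sRefl_apply, LinearIsometryEquiv.coe_mul, LinearIsometryEquiv.coe_inv]

lemma eq_sRefl_mul_comm {n : ℕ} {α : EV n} {g g' : EV n ≃ₗᵢ[ℝ] EV n}
    (h : g' = sRefl α * g) : g = sRefl α * g' := by
  rw [h, ← mul_assoc, sRefl_mul_self, one_mul]

lemma sRefl_mul_conj {n : ℕ} {α β : EV n} {v w sv sw : EV n ≃ₗᵢ[ℝ] EV n}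
    (hv : v = sRefl β * w) (hsw : sw = sRefl α * w) (hsv : sv = sRefl α * v) :
    sv = sRefl (sRefl α β) * sw := by
  rw [sRefl_map, sRefl_inv, hsv, hv, hsw, mul_assoc _ (sRefl α), ← mul_assoc (sRefl α) (sRefl α),
    sRefl_mul_self, one_mul, mul_assoc]

namespace BasedRootSystem

variable {n : ℕ} (R : BasedRootSystem n)

lemma mem_pos_or_mem_neg {α : EV n} (h : α ∈ R.Φ) : α ∈ R.pos ∨ α ∈ -R.pos := by
  rwa [R.pos_union] at h

lemma notMem_neg_of_mem_pos {α : EV n} (h : α ∈ R.pos) : α ∉ -R.pos :=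
  fun h' => (Set.eq_empty_iff_forall_notMem.mp R.pos_disj) α ⟨h, h'⟩

lemma mem_neg_pos_iff (x : EV n) : x ∈ -R.pos ↔ x ∈ R.Φ ∧ x ∉ R.pos := by
  refine ⟨fun h => ⟨R.pos_union ▸ Or.inr h, fun h' => R.notMem_neg_of_mem_pos h' h⟩,
    fun ⟨hΦ, hpos⟩ => (R.mem_pos_or_mem_neg hΦ).resolve_left hpos⟩

lemma pos_finite : R.pos.Finite := R.finite.subset R.pos_sub

lemma N_subset_pos (w : R.Weyl) : R.N w ⊆ R.pos := fun _ hα => hα.1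

lemma apply_mem_Φ_iff {g : EV n ≃ₗᵢ[ℝ] EV n} (hg : g ∈ R.Weyl) (x : EV n) :
    g x ∈ R.Φ ↔ x ∈ R.Φ := by
  induction hg using Subgroup.closure_induction generalizing x with
  | mem g hg =>
    obtain ⟨α, hα, rfl⟩ := hg
    exact ⟨fun h => sRefl_sRefl α x ▸ R.reflect_mem α hα _ h, R.reflect_mem α hα x⟩
  | one => rfl
  | mul g g' _ _ ihg ihg' => exact (ihg (g' x)).trans (ihg' x)
  | inv g _ ihg => rw [← ihg, LinearIsometryEquiv.coe_inv, g.apply_symm_apply]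

lemma ap_mem_Φ (w : R.Weyl) {α : EV n} (hα : α ∈ R.Φ) : R.ap w α ∈ R.Φ :=
  (R.apply_mem_Φ_iff w.2 α).2 hα

lemma ap_neg (w : R.Weyl) (x : EV n) : R.ap w (-x) = -R.ap w x :=
  map_neg _ x

lemma ap_inv_of_coe_eq_sRefl_mul {v w : R.Weyl} {β : EV n}
    (hv : (v : EV n ≃ₗᵢ[ℝ] EV n) = sRefl β * (w : EV n ≃ₗᵢ[ℝ] EV n)) (x : EV n) :
    R.ap v⁻¹ x = R.ap w⁻¹ (sRefl β x) := by
  simp only [ap, InvMemClass.coe_inv, hv, mul_inv_rev, sRefl_inv, LinearIsometryEquiv.coe_mul,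
    Function.comp_apply]

def simpleBasis : Module.Basis R.Δ ℝ (EV n) :=
  Module.Basis.mk R.Δ_indep (by rw [Subtype.range_coe, R.Δ_span])

lemma simpleBasis_apply (i : R.Δ) : R.simpleBasis i = i :=
  Module.Basis.mk_apply _ _ _

lemma repr_nonneg_of_mem_pos {α : EV n} (hα : α ∈ R.pos) (i : R.Δ) :
    0 ≤ R.simpleBasis.repr α i := by
  have hcl := R.pos_combo α hα
  clear hα
  induction hcl using AddSubmonoid.closure_induction with
  | mem x hx =>
    rw [show x = R.simpleBasis ⟨x, hx⟩ from (R.simpleBasis_apply ⟨x, hx⟩).symm,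
      Module.Basis.repr_self, Finsupp.single_apply]
    positivity
  | zero => simp
  | add x y _ _ hx hy => rw [map_add, Finsupp.add_apply]; exact add_nonneg hx hy

lemma repr_nonpos_of_mem_neg {α : EV n} (hα : α ∈ -R.pos) (i : R.Δ) :
    R.simpleBasis.repr α i ≤ 0 := by
  simpa using R.repr_nonneg_of_mem_pos (Set.mem_neg.1 hα) i

lemma sumCoords_pos_of_mem_pos {α : EV n} (hα : α ∈ R.pos) : 0 < R.simpleBasis.sumCoords α := by
  have hrepr : R.simpleBasis.repr α ≠ 0 := by
    simpa using R.nonzero α (R.pos_sub hα)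
  rw [Module.Basis.coe_sumCoords]
  exact Finset.sum_pos
    (fun i hi => (R.repr_nonneg_of_mem_pos hα i).lt_of_ne' (Finsupp.mem_support_iff.1 hi))
    (Finsupp.support_nonempty_iff.2 hrepr)

lemma sumCoords_neg_of_mem_neg {α : EV n} (hα : α ∈ -R.pos) : R.simpleBasis.sumCoords α < 0 := by
  have := R.sumCoords_pos_of_mem_pos (Set.mem_neg.1 hα)
  rw [map_neg] at this
  linarith

lemma sRefl_mem_pos_of_mem_Δ {αi β : EV n} (hαi : αi ∈ R.Δ) (hβ : β ∈ R.pos) (hne : β ≠ αi) :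
    sRefl αi β ∈ R.pos := by
  have hαiΦ : αi ∈ R.Φ := R.pos_sub (R.Δ_sub hαi)
  refine (R.mem_pos_or_mem_neg (R.reflect_mem αi hαiΦ β (R.pos_sub hβ))).resolve_right
    fun hneg => ?_
  let i : R.Δ := ⟨αi, hαi⟩
  have hrepr_i : R.simpleBasis.repr αi = Finsupp.single i 1 := by
    simpa [R.simpleBasis_apply] using R.simpleBasis.repr_self i
  -- `s_i β` and `β` share all coordinates except the `αi`-th, so `β` would be a multiple of `αi`
  have hcoord : ∀ j ≠ i, R.simpleBasis.repr β j = 0 := by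
    intro j hj
    have hsame : R.simpleBasis.repr (sRefl αi β) j = R.simpleBasis.repr β j := by
      simp [sRefl_apply, hrepr_i, hj]
    exact le_antisymm (hsame ▸ R.repr_nonpos_of_mem_neg hneg j) (R.repr_nonneg_of_mem_pos hβ j)
  have hβi : β = R.simpleBasis.repr β i • αi := by
    have : R.simpleBasis.repr β = Finsupp.single i (R.simpleBasis.repr β i) := by
      ext j
      by_cases hj : j = i
      · simp [hj]
      · simp [Ne.symm hj, hcoord j hj]
    conv_lhs => rw [← R.simpleBasis.repr.symm_apply_apply β, this]
    rw [Module.Basis.repr_symm_single, R.simpleBasis_apply]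
  rcases R.reduced αi hαiΦ _ (hβi ▸ R.pos_sub hβ) with h1 | h1
  · exact hne (by rw [hβi, h1, one_smul])
  · rw [hβi, h1, neg_one_smul] at hβ
    exact R.notMem_neg_of_mem_pos (R.Δ_sub hαi) (Set.mem_neg.2 hβ)

lemma N_sRefl_mul_of_mem_Δ {αi : EV n} (hαi : αi ∈ R.Δ) {v sv : R.Weyl}
    (hsv : (sv : EV n ≃ₗᵢ[ℝ] EV n) = sRefl αi * (v : EV n ≃ₗᵢ[ℝ] EV n))
    (hv : R.ap v⁻¹ αi ∈ R.pos) :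
    R.N sv = insert αi (sRefl αi ⁻¹' R.N v) := by
  ext α
  simp only [N, Set.mem_insert_iff, Set.mem_preimage, Set.mem_ofPred_eq,
    R.ap_inv_of_coe_eq_sRefl_mul hsv]
  constructor
  · rintro ⟨hα, hneg⟩
    by_cases h : α = αi
    · exact .inl h
    · exact .inr ⟨R.sRefl_mem_pos_of_mem_Δ hαi hα h, hneg⟩
  · rintro (rfl | ⟨hα, hneg⟩)
    · exact ⟨R.Δ_sub hαi, by rw [sRefl_self, R.ap_neg]; exact Set.neg_mem_neg.2 hv⟩
    · have hne : sRefl αi α ≠ αi := by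
        rintro h
        rw [h] at hneg
        exact R.notMem_neg_of_mem_pos hv hneg
      exact ⟨sRefl_sRefl αi α ▸ R.sRefl_mem_pos_of_mem_Δ hαi hα hne, hneg⟩

lemma len_sRefl_mul_of_mem_Δ {αi : EV n} (hαi : αi ∈ R.Δ) {v sv : R.Weyl}
    (hsv : (sv : EV n ≃ₗᵢ[ℝ] EV n) = sRefl αi * (v : EV n ≃ₗᵢ[ℝ] EV n))
    (hv : R.ap v⁻¹ αi ∈ R.pos) : R.len sv = R.len v + 1 := by
  have hnotMem : αi ∉ sRefl αi ⁻¹' R.N v := fun h =>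
    R.notMem_neg_of_mem_pos (R.Δ_sub hαi) (Set.mem_neg.2 (sRefl_self αi ▸ h.1))
  rw [len, len, R.N_sRefl_mul_of_mem_Δ hαi hsv hv,
    Set.ncard_insert_of_notMem hnotMem
      ((R.pos_finite.subset (R.N_subset_pos v)).preimage (sRefl αi).injective.injOn),
    Set.ncard_preimage_of_injective_subset_range (sRefl αi).injective (by simp)]

lemma len_sRefl_mul_of_mem_Δ_eq_or {αi : EV n} (hαi : αi ∈ R.Δ) {v sv : R.Weyl}
    (hsv : (sv : EV n ≃ₗᵢ[ℝ] EV n) = sRefl αi * (v : EV n ≃ₗᵢ[ℝ] EV n)) :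
    R.len sv = R.len v + 1 ∨ R.len v = R.len sv + 1 := by
  rcases R.mem_pos_or_mem_neg (R.ap_mem_Φ v⁻¹ (R.pos_sub (R.Δ_sub hαi))) with hv | hv
  · exact .inl (R.len_sRefl_mul_of_mem_Δ hαi hsv hv)
  · refine .inr (R.len_sRefl_mul_of_mem_Δ hαi (eq_sRefl_mul_comm hsv) ?_)
    rw [R.ap_inv_of_coe_eq_sRefl_mul hsv, sRefl_self, R.ap_neg]
    exact Set.mem_neg.1 hv

def NsRefl (β : EV n) : Set (EV n) := {α | α ∈ R.pos ∧ sRefl β α ∈ -R.pos}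

lemma N_sRefl_mul {β : EV n} (hβ : β ∈ R.pos) {v w : R.Weyl}
    (hv : (v : EV n ≃ₗᵢ[ℝ] EV n) = sRefl β * (w : EV n ≃ₗᵢ[ℝ] EV n)) :
    R.N v = sRefl β ⁻¹' (R.N w \ R.NsRefl β) ∪
      (fun x => -sRefl β x) ⁻¹' (R.NsRefl β \ R.N w) := by
  ext α
  simp only [N, NsRefl, Set.mem_union, Set.mem_preimage, Set.mem_sdiff, Set.mem_ofPred_eq,
    R.ap_inv_of_coe_eq_sRefl_mul hv, sRefl_sRefl, map_neg, R.ap_neg, Set.neg_mem_neg]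
  simp only [← Set.mem_neg, R.mem_neg_pos_iff]
  have hsα : sRefl β α ∈ R.Φ ↔ α ∈ R.Φ :=
    R.apply_mem_Φ_iff (Subgroup.subset_closure ⟨β, R.pos_sub hβ, rfl⟩) α
  have hwsα := R.apply_mem_Φ_iff (w⁻¹).2 (sRefl β α)
  have hα := @R.pos_sub α
  have hsα' := @R.pos_sub (sRefl β α)
  unfold ap
  tauto

lemma N_sRefl_mul_finite (w : R.Weyl) (β : EV n) :
    (R.N w \ R.NsRefl β).Finite ∧ (R.NsRefl β \ R.N w).Finite :=
  ⟨R.pos_finite.subset fun _ h => h.1.1, R.pos_finite.subset fun _ h => h.1.1⟩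

lemma neg_sRefl_involutive (β : EV n) : Function.Involutive fun x : EV n => -sRefl β x :=
  fun x => by simp [sRefl_sRefl]

lemma ncard_N_sRefl_mul {β : EV n} (hβ : β ∈ R.pos) {v w : R.Weyl}
    (hv : (v : EV n ≃ₗᵢ[ℝ] EV n) = sRefl β * (w : EV n ≃ₗᵢ[ℝ] EV n)) :
    (R.N v).ncard = (R.N w \ R.NsRefl β).ncard + (R.NsRefl β \ R.N w).ncard := by
  have hinv := neg_sRefl_involutive β
  have hdisj : Disjoint (sRefl β ⁻¹' (R.N w \ R.NsRefl β))
      ((fun x => -sRefl β x) ⁻¹' (R.NsRefl β \ R.N w)) :=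
    Set.disjoint_left.2 fun _ h h' => R.notMem_neg_of_mem_pos h.1.1 (Set.mem_neg.2 h'.1.1)
  obtain ⟨hfin, hfin'⟩ := R.N_sRefl_mul_finite w β
  rw [R.N_sRefl_mul hβ hv, Set.ncard_union_eq hdisj
      (hfin.preimage (sRefl β).injective.injOn) (hfin'.preimage hinv.injective.injOn),
    Set.ncard_preimage_of_injective_subset_range (sRefl β).injective (by simp),
    Set.ncard_preimage_of_injective_subset_range hinv.injective
      (by simp [hinv.surjective.range_eq])]

lemma neg_sRefl_notMem_N {β : EV n} (hβ : β ∈ R.pos) {w : R.Weyl} (hwβ : R.ap w⁻¹ β ∈ R.pos)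
    {γ : EV n} (hγ : γ ∈ R.N w ∩ R.NsRefl β) : -sRefl β γ ∉ R.N w := by
  rintro ⟨-, hneg⟩
  -- `-s_β γ = c β - γ`: heights force `c > 0` since `s_β γ < 0`, and then `w⁻¹ (c β - γ)`
  -- would have positive height
  set c := 2 * ⟪β, γ⟫ / ⟪β, β⟫
  have hc : 0 < c := by
    have hsγ := R.sumCoords_neg_of_mem_neg hγ.2.2
    rw [sRefl_apply, map_sub, map_smul, smul_eq_mul] at hsγ
    nlinarith [R.sumCoords_pos_of_mem_pos hγ.1.1, R.sumCoords_pos_of_mem_pos hβ]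
  have hwsγ := R.sumCoords_neg_of_mem_neg hneg
  have hwγ := R.sumCoords_neg_of_mem_neg hγ.1.2
  have hwβ' := mul_pos hc (R.sumCoords_pos_of_mem_pos hwβ)
  unfold ap at hwsγ hwγ hwβ'
  rw [sRefl_apply, neg_sub, map_sub, map_smul, map_sub, map_smul, smul_eq_mul] at hwsγ
  linarith

lemma ncard_N_inter_NsRefl_lt {β : EV n} (hβ : β ∈ R.pos) {w : R.Weyl}
    (hwβ : R.ap w⁻¹ β ∈ R.pos) :
    (R.N w ∩ R.NsRefl β).ncard < (R.NsRefl β \ R.N w).ncard := by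
  have hinv := neg_sRefl_involutive β
  have hβ_notMem : β ∉ (fun x => -sRefl β x) ⁻¹' (R.N w ∩ R.NsRefl β) := fun h =>
    R.notMem_neg_of_mem_pos hwβ (by simpa [sRefl_self] using h.1.2)
  have hsub : insert β ((fun x => -sRefl β x) ⁻¹' (R.N w ∩ R.NsRefl β)) ⊆
      R.NsRefl β \ R.N w := by
    rintro x (rfl | hx)
    · exact ⟨⟨hβ, by rw [sRefl_self]; exact Set.neg_mem_neg.2 hβ⟩,
        fun h => R.notMem_neg_of_mem_pos hwβ h.2⟩
    · refine ⟨⟨by simpa [sRefl_sRefl] using hx.2.2, Set.mem_neg.2 hx.1.1⟩, fun h => ?_⟩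
      exact R.neg_sRefl_notMem_N hβ hwβ hx (by simpa [sRefl_sRefl] using h)
  have hfin : (R.N w ∩ R.NsRefl β).Finite := R.pos_finite.subset fun _ h => h.1.1
  have := Set.ncard_le_ncard hsub (R.N_sRefl_mul_finite w β).2
  rw [Set.ncard_insert_of_notMem hβ_notMem (hfin.preimage hinv.injective.injOn),
    Set.ncard_preimage_of_injective_subset_range hinv.injective
      (by simp [hinv.surjective.range_eq])] at this
  omega

lemma len_lt_len_of_ap_inv_mem_pos {β : EV n} (hβ : β ∈ R.pos) {v w : R.Weyl}
    (hv : (v : EV n ≃ₗᵢ[ℝ] EV n) = sRefl β * (w : EV n ≃ₗᵢ[ℝ] EV n))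
    (hwβ : R.ap w⁻¹ β ∈ R.pos) : R.len w < R.len v := by
  have hsplit := Set.ncard_inter_add_ncard_sdiff_eq_ncard (R.N w) (R.NsRefl β)
    (R.pos_finite.subset (R.N_subset_pos w))
  have := R.ncard_N_inter_NsRefl_lt hβ hwβ
  rw [len, len, R.ncard_N_sRefl_mul hβ hv]
  omega

lemma ap_inv_mem_pos_of_len_lt {β : EV n} (hβ : β ∈ R.pos) {v w : R.Weyl}
    (hv : (v : EV n ≃ₗᵢ[ℝ] EV n) = sRefl β * (w : EV n ≃ₗᵢ[ℝ] EV n))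
    (hlt : R.len w < R.len v) : R.ap w⁻¹ β ∈ R.pos := by
  refine (R.mem_pos_or_mem_neg (R.ap_mem_Φ w⁻¹ (R.pos_sub hβ))).resolve_right fun hneg => ?_
  have hvβ : R.ap v⁻¹ β ∈ R.pos := by
    rw [R.ap_inv_of_coe_eq_sRefl_mul hv, sRefl_self, R.ap_neg]
    exact Set.mem_neg.1 hneg
  exact (R.len_lt_len_of_ap_inv_mem_pos hβ (eq_sRefl_mul_comm hv) hvβ).not_gt hlt

lemma edge_sRefl_mul_of_mem_Δ {h : Set (EV n)} {αi : EV n} (hαi : αi ∈ R.Δ)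
    {v w sv sw : R.Weyl}
    (hsw : (sw : EV n ≃ₗᵢ[ℝ] EV n) = sRefl αi * (w : EV n ≃ₗᵢ[ℝ] EV n))
    (hsv : (sv : EV n ≃ₗᵢ[ℝ] EV n) = sRefl αi * (v : EV n ≃ₗᵢ[ℝ] EV n))
    (hne : sw ≠ v) (hedge : R.Edge h w v) : R.Edge h sw sv := by
  obtain ⟨α, hα, hv, hmem⟩ := hedge
  have hααi : α ≠ αi := by
    rintro rfl
    exact hne (Subtype.ext (hsw.trans hv.symm))
  refine ⟨sRefl αi α, R.sRefl_mem_pos_of_mem_Δ hαi hα hααi, sRefl_mul_conj hv hsw hsv, ?_⟩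
  rwa [R.ap_inv_of_coe_eq_sRefl_mul hsv, sRefl_sRefl]

end BasedRootSystem

open BasedRootSystem in
theorem diamond_lemma_general {n : ℕ} (R : BasedRootSystem n) (h : Set (EV n))
    (v w sw sv : R.Weyl) (β : EV n) (hβ : β ∈ R.pos)
    (hv : (v : EV n ≃ₗᵢ[ℝ] EV n) = sRefl β * (w : EV n ≃ₗᵢ[ℝ] EV n))
    (hlen : R.len v = R.len w + 1) (αi : EV n) (hαi : αi ∈ R.Δ)
    (hsw : (sw : EV n ≃ₗᵢ[ℝ] EV n) = sRefl αi * (w : EV n ≃ₗᵢ[ℝ] EV n))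
    (hsv : (sv : EV n ≃ₗᵢ[ℝ] EV n) = sRefl αi * (v : EV n ≃ₗᵢ[ℝ] EV n))
    (hlsw : R.len sw = R.len w + 1) (hne : sw ≠ v) :
    R.bruhatLt v sv ∧ R.len sv = R.len sw + 1 ∧
      (R.Edge h w v ↔ R.Edge h sw sv) := by
  have hβαi : β ≠ αi := by
    rintro rfl
    exact hne (Subtype.ext (hsw.trans hv.symm))
  have hlt : R.len sw < R.len sv := by
    refine R.len_lt_len_of_ap_inv_mem_pos (R.sRefl_mem_pos_of_mem_Δ hαi hβ hβαi)
      (sRefl_mul_conj hv hsw hsv) ?_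
    rw [R.ap_inv_of_coe_eq_sRefl_mul hsw, sRefl_sRefl]
    exact R.ap_inv_mem_pos_of_len_lt hβ hv (by omega)
  have hlsv : R.len sv = R.len sw + 1 := by
    rcases R.len_sRefl_mul_of_mem_Δ_eq_or hαi hsv with h' | h' <;> omega
  have hne' : w ≠ sv := by
    rintro rfl
    exact hne (Subtype.ext (hsw.trans (eq_sRefl_mul_comm hsv).symm))
  exact ⟨.single ⟨αi, R.Δ_sub hαi, hsv, by omega⟩, hlsv,
    R.edge_sRefl_mul_of_mem_Δ hαi hsw hsv hne,
    R.edge_sRefl_mul_of_mem_Δ hαi (eq_sRefl_mul_comm hsw) (eq_sRefl_mul_comm hsv) hne'⟩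

open BasedRootSystem in
/-- (Diamond Lemma) If `v = s_β w` covers `w`, `s_i` is a simple reflection with
`ℓ(s_i w) = ℓ(w) + 1 = ℓ(v)` and `s_i w ≠ v`, then `s_i v > v` with
`ℓ(s_i v) = ℓ(s_i w) + 1`, and the edge `w → v` lies in `Γ_𝔥` iff the edge
`s_i w → s_i v` does. -/
theorem diamond_lemma {n : ℕ} (R : BasedRootSystem n) (h : Set (EV n))
    (hh : R.IsHess h) (v w sw sv : R.Weyl) (β : EV n) (hβ : β ∈ R.pos)
    (hv : (v : EV n ≃ₗᵢ[ℝ] EV n) = sRefl β * (w : EV n ≃ₗᵢ[ℝ] EV n))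
    (hlen : R.len v = R.len w + 1) (αi : EV n) (hαi : αi ∈ R.Δ)
    (hsw : (sw : EV n ≃ₗᵢ[ℝ] EV n) = sRefl αi * (w : EV n ≃ₗᵢ[ℝ] EV n))
    (hsv : (sv : EV n ≃ₗᵢ[ℝ] EV n) = sRefl αi * (v : EV n ≃ₗᵢ[ℝ] EV n))
    (hlsw : R.len sw = R.len w + 1) (hne : sw ≠ v) :
    R.bruhatLt v sv ∧ R.len sv = R.len sw + 1 ∧
      (R.Edge h w v ↔ R.Edge h sw sv) :=
  diamond_lemma_general R h v w sw sv β hβ hv hlen αi hαi hsw hsv hlsw hne
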